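/- arXiv:1004.3427 — 2 statements merged into one kernel-verified Lean document; each statement's English description precedes it below -/
import Mathlib

section
/- Let H(p) = -p·log₂(p) - (1-p)·log₂(1-p) be the binary entropy function (with H(0)=H(1)=0). Then the function f(t, s) = (1 + t/4)·H((4-s)/(4+t)) - t/2 - s/2, over the domain 0 ≤ t, 0 ≤ s, t + s ≤ 2, attains its maximum at t = 4/3, s = 0, where its value equals (4/3)·H(3/4) - 2/3. -/
/-!
Gibbs' inequality against the distribution `(3/4, 1/4)` gives
`H(p) ≤ 2 - p·log₂ 3` for `p ∈ [0, 1]`, with equality at `p = 3/4`. For `p = (4 - s)/(4 + t)`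
the factor `(1 + t/4)·p = 1 - s/4` no longer depends on `t`, so the bound turns into
`f(t, s) ≤ 2 - log₂ 3 - s·(2 - log₂ 3)/4 ≤ 2 - log₂ 3`, which is the value at `(4/3, 0)`.
-/

/-- Binary entropy function (base 2), with H(0)=H(1)=0 via `Real.logb 2 0 = 0`. -/
noncomputable def binH (p : ℝ) : ℝ := -(p * Real.logb 2 p) - (1 - p) * Real.logb 2 (1 - p)

open Real

lemma mul_log_sub_log_le_sub {p q : ℝ} (hp : 0 ≤ p) (hq : 0 < q) :
    p * (log q - log p) ≤ q - p := by
  rcases hp.eq_or_lt with rfl | hp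
  · simpa using hq.le
  calc p * (log q - log p) = p * log (q / p) := by rw [log_div hq.ne' hp.ne']
    _ ≤ p * (q / p - 1) := mul_le_mul_of_nonneg_left (log_le_sub_one_of_pos (by positivity)) hp.le
    _ = q - p := by field_simp

lemma binEntropy_le_crossEntropy {p q : ℝ} (hp₀ : 0 ≤ p) (hp₁ : p ≤ 1) (hq₀ : 0 < q) (hq₁ : q < 1) :
    binEntropy p ≤ -p * log q - (1 - p) * log (1 - q) := by
  have h₀ := mul_log_sub_log_le_sub hp₀ hq₀
  have h₁ := mul_log_sub_log_le_sub (sub_nonneg.mpr hp₁) (sub_pos.mpr hq₁)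
  rw [binEntropy_eq_negMulLog_add_negMulLog_one_sub, negMulLog, negMulLog]
  linarith

lemma binH_eq_binEntropy_div (p : ℝ) : binH p = binEntropy p / log 2 := by
  rw [binEntropy_eq_negMulLog_add_negMulLog_one_sub]
  simp only [binH, negMulLog, logb]
  ring

lemma binH_le_crossEntropy {p q : ℝ} (hp₀ : 0 ≤ p) (hp₁ : p ≤ 1) (hq₀ : 0 < q) (hq₁ : q < 1) :
    binH p ≤ -p * logb 2 q - (1 - p) * logb 2 (1 - q) := by
  rw [binH_eq_binEntropy_div]
  calc binEntropy p / log 2 ≤ (-p * log q - (1 - p) * log (1 - q)) / log 2 :=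
        div_le_div_of_nonneg_right (binEntropy_le_crossEntropy hp₀ hp₁ hq₀ hq₁)
          (log_pos one_lt_two).le
    _ = -p * logb 2 q - (1 - p) * logb 2 (1 - q) := by simp only [logb]; ring

lemma crossEntropy_three_quarters (p : ℝ) :
    -p * logb 2 (3 / 4) - (1 - p) * logb 2 (1 - 3 / 4) = 2 - p * logb 2 3 := by
  have h₄ : logb 2 4 = 2 := by
    rw [show (4 : ℝ) = 2 ^ (2 : ℝ) by norm_num, logb_rpow two_pos (by norm_num)]
  rw [logb_div three_ne_zero four_ne_zero, show (1 - 3 / 4 : ℝ) = 4⁻¹ by norm_num, logb_inv, h₄]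
  ring

lemma binH_le_two_sub_mul_logb_three {p : ℝ} (hp₀ : 0 ≤ p) (hp₁ : p ≤ 1) :
    binH p ≤ 2 - p * logb 2 3 :=
  (binH_le_crossEntropy hp₀ hp₁ (by norm_num) (by norm_num)).trans_eq
    (crossEntropy_three_quarters p)

lemma binH_three_quarters : binH (3 / 4) = 2 - 3 / 4 * logb 2 3 := by
  rw [← crossEntropy_three_quarters, binH, neg_mul]

lemma logb_two_three_le_two : logb 2 3 ≤ 2 := by
  rw [logb_le_iff_le_rpow one_lt_two three_pos]
  norm_num

/-- The function f(t,s) = (1+t/4)·H((4-s)/(4+t)) - t/2 - s/2 on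
{0 ≤ t, 0 ≤ s, t + s ≤ 2} attains its maximum at (t,s) = (4/3, 0),
with value (4/3)·H(3/4) - 2/3. -/
theorem stmt_0 :
    (∀ t s : ℝ, 0 ≤ t → 0 ≤ s → t + s ≤ 2 →
      (1 + t / 4) * binH ((4 - s) / (4 + t)) - t / 2 - s / 2
        ≤ (4 / 3) * binH (3 / 4) - 2 / 3) ∧
    (1 + (4 / 3 : ℝ) / 4) * binH ((4 - 0) / (4 + 4 / 3)) - (4 / 3) / 2 - 0 / 2
        = (4 / 3) * binH (3 / 4) - 2 / 3 := by
  refine ⟨fun t s ht hs hts => ?_, by norm_num⟩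
  have hscale : (1 + t / 4) * ((4 - s) / (4 + t)) = 1 - s / 4 := by field_simp
  have hbound : (1 + t / 4) * binH ((4 - s) / (4 + t)) ≤ 2 * (1 + t / 4) - (1 - s / 4) * logb 2 3 :=
    calc (1 + t / 4) * binH ((4 - s) / (4 + t))
        ≤ (1 + t / 4) * (2 - (4 - s) / (4 + t) * logb 2 3) :=
          mul_le_mul_of_nonneg_left (binH_le_two_sub_mul_logb_three
            (div_nonneg (by linarith) (by linarith)) ((div_le_one (by linarith)).mpr (by linarith)))
            (by linarith)
      _ = 2 * (1 + t / 4) - (1 - s / 4) * logb 2 3 := by rw [mul_sub, ← mul_assoc, hscale]; ring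
  have hslack := mul_nonneg hs (sub_nonneg.mpr logb_two_three_le_two)
  rw [binH_three_quarters]
  linarith
end

section
/- Non-existence of a symmetric-consistent deterministic auxiliary: there do not exist, for any index i with positive probability, nonnegative reals aᵢ, bᵢ, cᵢ, dᵢ (not all zero) such that (i) at least one of aᵢ, bᵢ is zero, (ii) at least one of cᵢ, dᵢ is zero, (iii) (aᵢ + bᵢ)/2 = cᵢ, and (iv) (cᵢ + dᵢ)/2 = bᵢ. -/
/-- In each of the four cases the two averaging equations form a nonsingular linear system
in the two remaining unknowns. -/
theorem eq_zero_of_averages {K : Type*} [Field K] [CharZero K] {a b c d : K}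
    (hab : a = 0 ∨ b = 0) (hcd : c = 0 ∨ d = 0)
    (hc : (a + b) / 2 = c) (hb : (c + d) / 2 = b) :
    a = 0 ∧ b = 0 ∧ c = 0 ∧ d = 0 := by
  rcases hab with rfl | rfl <;> rcases hcd with rfl | rfl <;> grind

/-- Non-existence of a symmetric-consistent deterministic auxiliary: there are no
nonnegative reals a, b, c, d, not all zero, with (a=0 ∨ b=0), (c=0 ∨ d=0),
(a+b)/2 = c and (c+d)/2 = b. -/
theorem stmt_13 :
    ¬ ∃ a b c d : ℝ, 0 ≤ a ∧ 0 ≤ b ∧ 0 ≤ c ∧ 0 ≤ d ∧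
      ¬ (a = 0 ∧ b = 0 ∧ c = 0 ∧ d = 0) ∧
      (a = 0 ∨ b = 0) ∧ (c = 0 ∨ d = 0) ∧
      (a + b) / 2 = c ∧ (c + d) / 2 = b := by
  rintro ⟨a, b, c, d, -, -, -, -, hne, hab, hcd, hc, hb⟩
  exact hne (eq_zero_of_averages hab hcd hc hb)
end
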